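/- Let V = F_q^{k_1} × ... × F_q^{k_n} with chain poset block metric d, and let H be the subgroup of symmetries of the form T(x_1,...,x_n) = (π_{(x_2,...,x_n)}(x_1), x_2, ..., x_n) where each π_X is a permutation of F_q^{k_1}, and K the subgroup of symmetries fixing the first coordinate: T(x_1,...,x_n) = (x_1, F_2(x_2,...,x_n), ..., F_n(x_n)). Then H is a normal subgroup of Symm(V,d), H ∩ K = {id}, and Symm(V,d) = H·K, so Symm(V,d) is the semidirect product H ⋊ K. -/

import Mathlib

/-!
`d(u, v) ≤ m` says exactly that `u` and `v` agree in every block of index `> m`, so a bijection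
is a symmetry iff it preserves and reflects each of these agreement relations. In particular the
blocks `2, …, n` of `T v` depend only on the blocks `2, …, n` of `v`. Overwriting the first
block of `T v` by that of `v` therefore gives a symmetry `κ(T) ∈ K`, and `T κ(T)⁻¹` moves
only the first block, i.e. lies in `H`. Normality of `H` and `H ∩ K = {1}` are immediate from the
same description of symmetries.
-/

/-- The chain poset block metric: `d(u,v) = max{ i : u_i ≠ v_i }` (1-indexed), `0` if `u = v`. -/
def chainDist {F : Type*} [DecidableEq F] {n : ℕ} {k : Fin n → ℕ}
    (u v : ∀ i : Fin n, Fin (k i) → F) : ℕ :=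
  (Finset.univ.filter fun i => u i ≠ v i).sup fun i => (i : ℕ) + 1

/-- The set of symmetries of the chain poset block space. -/
def SymmSet (F : Type*) [Field F] [Fintype F] [DecidableEq F] {n : ℕ} (k : Fin n → ℕ) :
    Set (Equiv.Perm (∀ i : Fin n, Fin (k i) → F)) :=
  {T | ∀ u v, chainDist (T u) (T v) = chainDist u v}

/-- `H`: symmetries of the form `T(x_1,…,x_n) = (π_{(x_2,…,x_n)}(x_1), x_2, …, x_n)`,
i.e. symmetries fixing all coordinates except the first. -/
def HSet (F : Type*) [Field F] [Fintype F] [DecidableEq F] {n : ℕ} (k : Fin n → ℕ)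
    (hn : 0 < n) : Set (Equiv.Perm (∀ i : Fin n, Fin (k i) → F)) :=
  {T | T ∈ SymmSet F k ∧ ∀ v (j : Fin n), j ≠ ⟨0, hn⟩ → T v j = v j}

/-- `K`: symmetries of the form `T(x_1,…,x_n) = (x_1, F_2(x_2,…,x_n), …, F_n(x_n))`,
i.e. symmetries fixing the first coordinate whose other components do not depend on
the first coordinate. -/
def KSet (F : Type*) [Field F] [Fintype F] [DecidableEq F] {n : ℕ} (k : Fin n → ℕ)
    (hn : 0 < n) : Set (Equiv.Perm (∀ i : Fin n, Fin (k i) → F)) :=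
  {T | T ∈ SymmSet F k ∧ (∀ v, T v ⟨0, hn⟩ = v ⟨0, hn⟩) ∧
    ∀ u v, (∀ j : Fin n, j ≠ ⟨0, hn⟩ → u j = v j) →
      ∀ j : Fin n, j ≠ ⟨0, hn⟩ → T u j = T v j}

section ChainBlockSpace

variable {F : Type*} {n : ℕ} {k : Fin n → ℕ}

variable (F k) in
abbrev Blocks : Type _ := ∀ i : Fin n, Fin (k i) → F

-- Blocks are indexed from `0`, so `AgreeFrom m u v` says `d(u, v) ≤ m` (see `chainDist_le_iff`).
def AgreeFrom (m : ℕ) (u v : Blocks F k) : Prop :=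
  ∀ j : Fin n, m ≤ (j : ℕ) → u j = v j

lemma agreeFrom_zero_iff (hn : 0 < n) {u v : Blocks F k} :
    AgreeFrom 0 u v ↔ u ⟨0, hn⟩ = v ⟨0, hn⟩ ∧ AgreeFrom 1 u v := by
  refine ⟨fun h => ⟨h _ le_rfl, fun j _ => h j j.val.zero_le⟩, fun ⟨h0, h1⟩ j _ => ?_⟩
  rcases Nat.eq_zero_or_pos j with hj | hj
  · rwa [Fin.ext (hj.trans rfl : (j : ℕ) = (⟨0, hn⟩ : Fin n))]
  · exact h1 j hj

lemma agreeFrom_zero_iff_eq {u v : Blocks F k} : AgreeFrom 0 u v ↔ u = v :=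
  ⟨fun h => funext fun j => h j j.val.zero_le, fun h _ _ => h ▸ rfl⟩

lemma agreeFrom_one_iff (hn : 0 < n) {u v : Blocks F k} :
    AgreeFrom 1 u v ↔ ∀ j : Fin n, j ≠ ⟨0, hn⟩ → u j = v j := by
  refine forall_congr' fun j => imp_congr_left ?_
  rw [Ne, Fin.ext_iff, Nat.one_le_iff_ne_zero]

lemma chainDist_le_iff [DecidableEq F] {u v : Blocks F k} {m : ℕ} :
    chainDist u v ≤ m ↔ AgreeFrom m u v := by
  simp only [chainDist, Finset.sup_le_iff, Finset.mem_filter, Finset.mem_univ, true_and,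
    AgreeFrom]
  exact forall_congr' fun j => by rw [Ne, not_imp_comm, not_le, Nat.lt_add_one_iff]

-- The `K`-factor of a symmetry `T`.
def fixFirstBlock (hn : 0 < n) (T : Equiv.Perm (Blocks F k)) (v : Blocks F k) : Blocks F k :=
  Function.update (T v) ⟨0, hn⟩ (v ⟨0, hn⟩)

lemma fixFirstBlock_apply_zero (hn : 0 < n) (T : Equiv.Perm (Blocks F k)) (v : Blocks F k) :
    fixFirstBlock hn T v ⟨0, hn⟩ = v ⟨0, hn⟩ :=
  Function.update_self _ _ _

lemma agreeFrom_one_fixFirstBlock (hn : 0 < n) (T : Equiv.Perm (Blocks F k)) (v : Blocks F k) :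
    AgreeFrom 1 (fixFirstBlock hn T v) (T v) :=
  (agreeFrom_one_iff hn).mpr fun _ hj => Function.update_of_ne hj _ _

lemma agreeFrom_succ_fixFirstBlock_iff (hn : 0 < n) (T : Equiv.Perm (Blocks F k)) (m : ℕ)
    (u v : Blocks F k) :
    AgreeFrom (m + 1) (fixFirstBlock hn T u) (fixFirstBlock hn T v) ↔
      AgreeFrom (m + 1) (T u) (T v) := by
  refine forall_congr' fun j => imp_congr_right fun hj => ?_
  have hj0 : j ≠ ⟨0, hn⟩ := fun h => by simp [h] at hj
  simp only [fixFirstBlock, Function.update_of_ne hj0]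

section Symmetries

variable [Field F] [Fintype F] [DecidableEq F]

lemma mem_symmSet_iff {T : Equiv.Perm (Blocks F k)} :
    T ∈ SymmSet F k ↔ ∀ m u v, AgreeFrom m (T u) (T v) ↔ AgreeFrom m u v := by
  refine ⟨fun hT m u v => ?_, fun hT u v => eq_of_forall_ge_iff fun m => ?_⟩
  · rw [← chainDist_le_iff, ← chainDist_le_iff, hT u v]
  · rw [chainDist_le_iff, chainDist_le_iff, hT]

lemma agreeFrom_of_mem_symmSet {T : Equiv.Perm (Blocks F k)} (hT : T ∈ SymmSet F k) {m : ℕ}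
    {u v : Blocks F k} (h : AgreeFrom m u v) : AgreeFrom m (T u) (T v) :=
  (mem_symmSet_iff.mp hT m u v).mpr h

lemma inv_mem_symmSet {T : Equiv.Perm (Blocks F k)} (hT : T ∈ SymmSet F k) :
    T⁻¹ ∈ SymmSet F k := by
  intro u v
  simpa using (hT (T⁻¹ u) (T⁻¹ v)).symm

lemma mul_mem_symmSet {S T : Equiv.Perm (Blocks F k)} (hS : S ∈ SymmSet F k)
    (hT : T ∈ SymmSet F k) : S * T ∈ SymmSet F k := fun u v => (hS (T u) (T v)).trans (hT u v)

lemma mem_HSet_iff (hn : 0 < n) {T : Equiv.Perm (Blocks F k)} :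
    T ∈ HSet F k hn ↔ T ∈ SymmSet F k ∧ ∀ v, AgreeFrom 1 (T v) v := by
  simp only [HSet, Set.mem_ofPred_eq, agreeFrom_one_iff hn]

lemma conj_mem_HSet (hn : 0 < n) {T h : Equiv.Perm (Blocks F k)} (hT : T ∈ SymmSet F k)
    (hh : h ∈ HSet F k hn) : T * h * T⁻¹ ∈ HSet F k hn := by
  rw [mem_HSet_iff hn] at hh ⊢
  refine ⟨mul_mem_symmSet (mul_mem_symmSet hT hh.1) (inv_mem_symmSet hT), fun v => ?_⟩
  simpa using agreeFrom_of_mem_symmSet hT (hh.2 (T⁻¹ v))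

lemma HSet_inter_KSet (hn : 0 < n) : HSet F k hn ∩ KSet F k hn = {1} := by
  ext T
  refine ⟨fun ⟨⟨_, hH⟩, _, hK, _⟩ => Equiv.ext fun v => funext fun j => ?_, ?_⟩
  · by_cases hj : j = ⟨0, hn⟩
    · subst hj
      exact hK v
    · exact hH v j hj
  · rintro rfl
    exact ⟨⟨fun _ _ => rfl, fun _ _ _ => rfl⟩, fun _ _ => rfl, fun _ => rfl, fun _ _ h => h⟩

lemma agreeFrom_fixFirstBlock_iff (hn : 0 < n) {T : Equiv.Perm (Blocks F k)}
    (hT : T ∈ SymmSet F k) (m : ℕ) (u v : Blocks F k) :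
    AgreeFrom m (fixFirstBlock hn T u) (fixFirstBlock hn T v) ↔ AgreeFrom m u v := by
  have hT' := mem_symmSet_iff.mp hT
  cases m with
  | zero =>
    rw [agreeFrom_zero_iff hn, agreeFrom_zero_iff hn, fixFirstBlock_apply_zero,
      fixFirstBlock_apply_zero, agreeFrom_succ_fixFirstBlock_iff, hT']
  | succ m => rw [agreeFrom_succ_fixFirstBlock_iff, hT']

lemma fixFirstBlock_fixFirstBlock_inv (hn : 0 < n) {T : Equiv.Perm (Blocks F k)}
    (hT : T ∈ SymmSet F k) (w : Blocks F k) :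
    fixFirstBlock hn T (fixFirstBlock hn T⁻¹ w) = w := by
  have h1 : AgreeFrom 1 (T (fixFirstBlock hn T⁻¹ w)) w := by
    simpa using agreeFrom_of_mem_symmSet hT (agreeFrom_one_fixFirstBlock hn T⁻¹ w)
  have h2 := agreeFrom_one_fixFirstBlock hn T (fixFirstBlock hn T⁻¹ w)
  rw [← agreeFrom_zero_iff_eq, agreeFrom_zero_iff hn, fixFirstBlock_apply_zero,
    fixFirstBlock_apply_zero]
  exact ⟨rfl, fun j hj => (h2 j hj).trans (h1 j hj)⟩

def fixFirstBlockPerm (hn : 0 < n) {T : Equiv.Perm (Blocks F k)} (hT : T ∈ SymmSet F k) :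
    Equiv.Perm (Blocks F k) where
  toFun := fixFirstBlock hn T
  invFun := fixFirstBlock hn T⁻¹
  left_inv v := by simpa using fixFirstBlock_fixFirstBlock_inv hn (inv_mem_symmSet hT) v
  right_inv := fixFirstBlock_fixFirstBlock_inv hn hT

lemma fixFirstBlockPerm_mem_symmSet (hn : 0 < n) {T : Equiv.Perm (Blocks F k)}
    (hT : T ∈ SymmSet F k) : fixFirstBlockPerm hn hT ∈ SymmSet F k :=
  mem_symmSet_iff.mpr (agreeFrom_fixFirstBlock_iff hn hT)

lemma fixFirstBlockPerm_mem_KSet (hn : 0 < n) {T : Equiv.Perm (Blocks F k)}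
    (hT : T ∈ SymmSet F k) : fixFirstBlockPerm hn hT ∈ KSet F k hn := by
  refine ⟨fixFirstBlockPerm_mem_symmSet hn hT, fixFirstBlock_apply_zero hn T, fun u v huv => ?_⟩
  rw [← agreeFrom_one_iff hn] at huv ⊢
  exact (agreeFrom_fixFirstBlock_iff hn hT 1 u v).mpr huv

lemma mul_fixFirstBlockPerm_inv_mem_HSet (hn : 0 < n) {T : Equiv.Perm (Blocks F k)}
    (hT : T ∈ SymmSet F k) : T * (fixFirstBlockPerm hn hT)⁻¹ ∈ HSet F k hn := by
  set κ := fixFirstBlockPerm hn hT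
  have hκ : κ ∈ SymmSet F k := fixFirstBlockPerm_mem_symmSet hn hT
  refine (mem_HSet_iff hn).mpr ⟨mul_mem_symmSet hT (inv_mem_symmSet hκ), fun v j hj => ?_⟩
  have h := agreeFrom_one_fixFirstBlock hn T (κ⁻¹ v) j hj
  rw [show fixFirstBlock hn T (κ⁻¹ v) = v from κ.apply_symm_apply v] at h
  exact h.symm

end Symmetries

end ChainBlockSpace

/-- `Symm(V,d)` is the (inner) semidirect product `H ⋊ K`: `H` is normal in the symmetry
group, `H ∩ K = {id}` and every symmetry factors as `h * k` with `h ∈ H`, `k ∈ K`. -/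
theorem stmt5 {F : Type*} [Field F] [Fintype F] [DecidableEq F] {n : ℕ} (k : Fin n → ℕ)
    (hn : 0 < n) :
    (∀ T ∈ SymmSet F k, ∀ h ∈ HSet F k hn, T * h * T⁻¹ ∈ HSet F k hn) ∧
    (HSet F k hn ∩ KSet F k hn = {1}) ∧
    (∀ T ∈ SymmSet F k, ∃ h ∈ HSet F k hn, ∃ k' ∈ KSet F k hn, T = h * k') := by
  refine ⟨fun T hT h hh => conj_mem_HSet hn hT hh, HSet_inter_KSet hn, fun T hT => ?_⟩
  exact ⟨_, mul_fixFirstBlockPerm_inv_mem_HSet hn hT, _, fixFirstBlockPerm_mem_KSet hn hT,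
    (inv_mul_cancel_right T _).symm⟩
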